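/- Let Z_1, …, Z_n be i.i.d. random variables with values in {1, …, r}, P(Z_1 = a) = p_a > 0, and let p̂_a = #{i : Z_i = a}/n be the empirical frequencies. For every Γ ≥ 0 there exists λ_Γ > 0, depending only on Γ, p_min = min_a p_a, N, and y, such that with probability at least 1 − r·exp(−n·p_min/8) the following holds: p̂_a ≥ p_a/2 for all a, and for every 0 < λ < λ_Γ the unique minimizer g of Φ_{p̂,λ} satisfies min_a y_a·g_a > Γ. -/

import Mathlib

/-!
On the event that every empirical weight is at least `p_min / 2`, the margin bound is
deterministic. The point `T • y` has logistic loss at most `r · ℓ(T)`, small for large `T`, and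
ridge penalty `λ T² yᵀN⁻¹y / 2`, small for small `λ`; a minimizer `g` with `y_a g_a ≤ Γ` would
instead pay at least `(p_min / 2) · ℓ(Γ)` on template `a`. The event fails at template `a` only if
a binomial count falls below half its mean, which by the multiplicative Chernoff bound has
probability at most `exp(-n p_a / 8)`; a union bound over the `r` templates concludes.
-/

open Matrix Set MeasureTheory ProbabilityTheory Finset

/-- Logistic loss `ℓ(u) = log(1 + e^{−u})`. -/
noncomputable def logLoss (u : ℝ) : ℝ := Real.log (1 + Real.exp (-u))

/-- Finite-template objective
`Φ_{q,λ}(g) = ∑ₐ q_a·ℓ(y_a·g_a) + (λ/2)·gᵀ N⁻¹ g`. -/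
noncomputable def templateObj {r : ℕ} (N : Matrix (Fin r) (Fin r) ℝ)
    (y q : Fin r → ℝ) (lam : ℝ) (g : Fin r → ℝ) : ℝ :=
  ∑ a, q a * logLoss (y a * g a) + (lam / 2) * (g ⬝ᵥ (N⁻¹ *ᵥ g))

open Filter Topology

lemma logLoss_nonneg (u : ℝ) : 0 ≤ logLoss u :=
  Real.log_nonneg (le_add_of_nonneg_right (Real.exp_pos _).le)

lemma logLoss_pos (u : ℝ) : 0 < logLoss u :=
  Real.log_pos (lt_add_of_pos_right _ (Real.exp_pos _))

lemma logLoss_antitone : Antitone logLoss := fun _ _ h =>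
  Real.log_le_log (by positivity) (by gcongr)

lemma tendsto_logLoss_atTop : Tendsto logLoss atTop (𝓝 0) := by
  show Tendsto (fun u => Real.log (1 + Real.exp (-u))) atTop (𝓝 0)
  have h : Tendsto (fun u => 1 + Real.exp (-u)) atTop (𝓝 1) := by
    simpa using Real.tendsto_exp_neg_atTop_nhds_zero.const_add 1
  simpa [Function.comp_def] using (Real.continuousAt_log one_ne_zero).tendsto.comp h

section Objective

variable {r : ℕ} {N : Matrix (Fin r) (Fin r) ℝ} {y q : Fin r → ℝ} {lam : ℝ}

lemma mul_logLoss_le_templateObj (hN : N.PosDef) (hlam : 0 ≤ lam) (hq : ∀ b, 0 ≤ q b)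
    (g : Fin r → ℝ) (a : Fin r) :
    q a * logLoss (y a * g a) ≤ templateObj N y q lam g := by
  have hquad : 0 ≤ g ⬝ᵥ (N⁻¹ *ᵥ g) := hN.inv.posSemidef.dotProduct_mulVec_nonneg g
  have hsingle : q a * logLoss (y a * g a) ≤ ∑ b, q b * logLoss (y b * g b) :=
    Finset.single_le_sum (f := fun b => q b * logLoss (y b * g b))
      (fun b _ => mul_nonneg (hq b) (logLoss_nonneg _)) (Finset.mem_univ a)
  unfold templateObj
  nlinarith

lemma templateObj_smul_le (hy : ∀ a, y a = 1 ∨ y a = -1) (hq1 : ∀ b, q b ≤ 1) (T : ℝ) :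
    templateObj N y q lam (T • y) ≤ r * logLoss T + lam / 2 * T ^ 2 * (y ⬝ᵥ (N⁻¹ *ᵥ y)) := by
  have hmargin : ∀ b, y b * (T • y) b = T := fun b => by rcases hy b with h | h <;> simp [h]
  have hloss : ∑ b, q b * logLoss (y b * (T • y) b) ≤ r * logLoss T := by
    simp_rw [hmargin]
    calc ∑ b, q b * logLoss T ≤ ∑ _b : Fin r, logLoss T :=
          Finset.sum_le_sum fun b _ => mul_le_of_le_one_left (logLoss_nonneg T) (hq1 b)
      _ = r * logLoss T := by simp
  have hquad : (T • y) ⬝ᵥ (N⁻¹ *ᵥ (T • y)) = T ^ 2 * (y ⬝ᵥ (N⁻¹ *ᵥ y)) := by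
    rw [mulVec_smul, smul_dotProduct, dotProduct_smul, smul_eq_mul, smul_eq_mul]; ring
  unfold templateObj
  rw [hquad]
  linarith

end Objective

lemma exists_margin_gt_of_isMinOn_templateObj {r : ℕ} (N : Matrix (Fin r) (Fin r) ℝ)
    (hN : N.PosDef) (y : Fin r → ℝ) (hy : ∀ a, y a = 1 ∨ y a = -1) {qmin : ℝ} (hqmin : 0 < qmin)
    (Γ : ℝ) :
    ∃ lamΓ : ℝ, 0 < lamΓ ∧ ∀ q : Fin r → ℝ, (∀ a, qmin ≤ q a) → (∀ a, q a ≤ 1) →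
      ∀ lam : ℝ, 0 < lam → lam < lamΓ → ∀ g : Fin r → ℝ,
        IsMinOn (templateObj N y q lam) univ g → ∀ a, Γ < y a * g a := by
  set ε := qmin * logLoss Γ
  have hε : 0 < ε := mul_pos hqmin (logLoss_pos Γ)
  obtain ⟨T, hT⟩ := ((tendsto_logLoss_atTop.const_mul (r : ℝ)).eventually
    (gt_mem_nhds (by linarith : (r : ℝ) * 0 < ε / 2))).exists
  set Q := T ^ 2 * (y ⬝ᵥ (N⁻¹ *ᵥ y))
  have hQ : 0 ≤ Q := mul_nonneg (sq_nonneg T) (hN.inv.posSemidef.dotProduct_mulVec_nonneg y)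
  refine ⟨ε / (Q + 1), by positivity, fun q hqmin_le hq1 lam hlam hlamΓ g hg a => ?_⟩
  by_contra! ha
  have hq : ∀ b, 0 ≤ q b := fun b => hqmin.le.trans (hqmin_le b)
  have hpenalty : lam * Q < ε := by
    calc lam * Q ≤ lam * (Q + 1) := by nlinarith
      _ < ε := (lt_div_iff₀ (by positivity)).1 hlamΓ
  have hlow : ε ≤ templateObj N y q lam g :=
    (mul_le_mul (hqmin_le a) (logLoss_antitone ha) (logLoss_pos Γ).le (hq a)).trans
      (mul_logLoss_le_templateObj hN hlam.le hq g a)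
  have hup := templateObj_smul_le (N := N) (lam := lam) hy hq1 T
  have hmin : templateObj N y q lam g ≤ templateObj N y q lam (T • y) := hg (Set.mem_univ _)
  nlinarith

section Chernoff

variable {Ω : Type*} [MeasurableSpace Ω] {μ : Measure Ω} [IsProbabilityMeasure μ]

lemma mgf_indicator_one_le {A : Set Ω} (hA : MeasurableSet A) (t : ℝ) :
    mgf (A.indicator 1) μ t ≤ Real.exp ((Real.exp t - 1) * μ.real A) := by
  have haffine : (fun ω => Real.exp (t * A.indicator 1 ω)) =
      fun ω => 1 + (Real.exp t - 1) * A.indicator 1 ω := by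
    funext ω
    by_cases h : ω ∈ A <;> simp [h]
  have hint : Integrable (A.indicator (1 : Ω → ℝ)) μ := (integrable_const 1).indicator hA
  rw [mgf, haffine, integral_add (integrable_const 1) (hint.const_mul _), integral_const,
    integral_const_mul, integral_indicator_one hA]
  simpa [add_comm] using Real.add_one_le_exp ((Real.exp t - 1) * μ.real A)

lemma measure_card_filter_le_half_mean_le {ι α : Type*} [Fintype ι] [MeasurableSpace α]
    [MeasurableSingletonClass α] [DecidableEq α] (Z : ι → Ω → α) (hZ : ∀ i, Measurable (Z i))
    (hindep : iIndepFun Z μ) (a : α) {p : ℝ} (hp : 0 ≤ p)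
    (hdist : ∀ i, μ {ω | Z i ω = a} = ENNReal.ofReal p) :
    μ {ω | (#{i | Z i ω = a} : ℝ) ≤ Fintype.card ι * p / 2} ≤
      ENNReal.ofReal (Real.exp (-(Fintype.card ι * p) / 8)) := by
  set c : ℝ := Fintype.card ι * p
  set f : α → ℝ := ({a} : Set α).indicator 1
  have hf : Measurable f := measurable_const.indicator (measurableSet_singleton a)
  set X : ι → Ω → ℝ := fun i => f ∘ Z i
  have hX : ∀ i, Measurable (X i) := fun i => hf.comp (hZ i)
  have hXA : ∀ i, X i = {ω | Z i ω = a}.indicator 1 := fun i => by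
    funext ω; by_cases h : Z i ω = a <;> simp [X, f, h]
  have hcard : ∀ ω, (#{i | Z i ω = a} : ℝ) = (∑ i, X i) ω := fun ω => by
    rw [Finset.natCast_card_filter, Finset.sum_apply]
    refine Finset.sum_congr rfl fun i _ => ?_
    by_cases h : Z i ω = a <;> simp [X, f, h]
  have hmgf : ∀ i, mgf (X i) μ (-Real.log 2) ≤ Real.exp (-(p / 2)) := fun i => by
    have hA : MeasurableSet {ω | Z i ω = a} := hZ i (measurableSet_singleton a)
    have hreal : μ.real {ω | Z i ω = a} = p := by
      rw [measureReal_def, hdist i, ENNReal.toReal_ofReal hp]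
    have := mgf_indicator_one_le (μ := μ) hA (-Real.log 2)
    rw [hXA i]
    convert this using 2
    rw [hreal, Real.exp_neg, Real.exp_log two_pos]; ring
  have hint : Integrable (fun ω => Real.exp (-Real.log 2 * (∑ i, X i) ω)) μ := by
    refine Integrable.of_bound (by fun_prop) 1 (ae_of_all _ fun ω => ?_)
    rw [Real.norm_eq_abs, Real.abs_exp, Real.exp_le_one_iff, ← hcard]
    exact mul_nonpos_of_nonpos_of_nonneg (neg_nonpos.2 (Real.log_nonneg one_le_two))
      (by positivity)
  have hmarkov :=
    measure_le_le_exp_mul_mgf (c / 2) (neg_nonpos.2 (Real.log_nonneg one_le_two)) hint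
  rw [(hindep.comp (fun _ => f) fun _ => hf).mgf_sum hX] at hmarkov
  have hprod : ∏ i, mgf (X i) μ (-Real.log 2) ≤ Real.exp (-(c / 2)) := by
    calc ∏ i, mgf (X i) μ (-Real.log 2) ≤ ∏ _i : ι, Real.exp (-(p / 2)) :=
          Finset.prod_le_prod (fun i _ => mgf_nonneg) fun i _ => hmgf i
      _ = Real.exp (-(c / 2)) := by
          rw [Finset.prod_const, Finset.card_univ, ← Real.exp_nat_mul, mul_neg, mul_div_assoc']
  -- the Chernoff exponent at `t = -log 2` is `(1 - log 2) / 2 ≥ 1 / 8`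
  have hexp : Real.exp (Real.log 2 * (c / 2)) * Real.exp (-(c / 2)) ≤ Real.exp (-c / 8) := by
    rw [← Real.exp_add]
    refine Real.exp_le_exp.2 ?_
    have hc : 0 ≤ c := by positivity
    nlinarith [Real.log_two_lt_d9]
  rw [← ofReal_measureReal]
  refine ENNReal.ofReal_le_ofReal ?_
  simp only [hcard]
  calc _ ≤ _ := hmarkov
    _ ≤ Real.exp (Real.log 2 * (c / 2)) * Real.exp (-(c / 2)) := by
        rw [neg_neg]; gcongr
    _ ≤ _ := hexp

lemma one_sub_card_mul_exp_le_measure_forall_half_le {n : ℕ} (hn : 0 < n) {α : Type*}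
    [Fintype α] [MeasurableSpace α] [MeasurableSingletonClass α] [DecidableEq α]
    (Z : Fin n → Ω → α) (hZ : ∀ i, Measurable (Z i)) (hindep : iIndepFun Z μ)
    {p : α → ℝ} (hp : ∀ a, 0 ≤ p a) (hdist : ∀ i a, μ {ω | Z i ω = a} = ENNReal.ofReal (p a))
    {pmin : ℝ} (hpmin : ∀ a, pmin ≤ p a) :
    ENNReal.ofReal (1 - Fintype.card α * Real.exp (-(n * pmin) / 8)) ≤
      μ {ω | ∀ a, p a / 2 ≤ (#{i | Z i ω = a} : ℝ) / n} := by
  set good := {ω | ∀ a, p a / 2 ≤ (#{i | Z i ω = a} : ℝ) / n}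
  have hbad : goodᶜ ⊆ ⋃ a, {ω | (#{i | Z i ω = a} : ℝ) ≤ n * p a / 2} := fun ω hω => by
    obtain ⟨a, ha⟩ := not_forall.1 hω
    rw [not_le, div_lt_iff₀ (by exact_mod_cast hn)] at ha
    exact mem_iUnion.2 ⟨a, show (_ : ℝ) ≤ _ by linarith⟩
  have hbad_le : μ goodᶜ ≤ ENNReal.ofReal (Fintype.card α * Real.exp (-(n * pmin) / 8)) := by
    calc μ goodᶜ ≤ ∑ a, μ {ω | (#{i | Z i ω = a} : ℝ) ≤ n * p a / 2} :=
          (measure_mono hbad).trans (measure_iUnion_fintype_le μ _)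
      _ ≤ ∑ _a : α, ENNReal.ofReal (Real.exp (-(n * pmin) / 8)) := by
          refine Finset.sum_le_sum fun a _ => ?_
          have hchernoff := measure_card_filter_le_half_mean_le Z hZ hindep a (hp a) (hdist · a)
          rw [Fintype.card_fin] at hchernoff
          refine hchernoff.trans (ENNReal.ofReal_le_ofReal (Real.exp_le_exp.2 ?_))
          nlinarith [hpmin a, n.cast_nonneg (α := ℝ)]
      _ = ENNReal.ofReal (Fintype.card α * Real.exp (-(n * pmin) / 8)) := by
          rw [Finset.sum_const, Finset.card_univ, nsmul_eq_mul,
            ENNReal.ofReal_mul (Nat.cast_nonneg _), ENNReal.ofReal_natCast]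
  rw [ENNReal.ofReal_sub _ (by positivity), ENNReal.ofReal_one, tsub_le_iff_right]
  calc (1 : ENNReal) = μ univ := measure_univ.symm
    _ ≤ μ good + μ goodᶜ := measure_univ_le_add_compl good
    _ ≤ _ := add_le_add_right hbad_le _

end Chernoff

theorem ideal_margin_empirical_weights_general
    {Ω : Type*} [MeasurableSpace Ω] (μ : Measure Ω) [IsProbabilityMeasure μ]
    (n r : ℕ) (hn : 0 < n)
    (Z : Fin n → Ω → Fin r) (hZmeas : ∀ i, Measurable (Z i))
    (hindep : iIndepFun Z μ)
    (p : Fin r → ℝ) (hp : ∀ a, 0 < p a)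
    (hdist : ∀ i a, μ {ω | Z i ω = a} = ENNReal.ofReal (p a))
    (pmin : ℝ) (hpmin : IsLeast {x : ℝ | ∃ a, x = p a} pmin)
    (N : Matrix (Fin r) (Fin r) ℝ) (hN : N.PosDef)
    (y : Fin r → ℝ) (hy : ∀ a, y a = 1 ∨ y a = -1)
    (phat : Fin r → Ω → ℝ)
    (hphat : ∀ a ω, phat a ω = ((univ.filter (fun i => Z i ω = a)).card : ℝ) / n)
    (Γ : ℝ) :
    ∃ lamΓ : ℝ, 0 < lamΓ ∧
      ENNReal.ofReal (1 - r * Real.exp (-(n * pmin) / 8)) ≤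
        μ {ω | (∀ a, p a / 2 ≤ phat a ω) ∧
          ∀ lam : ℝ, 0 < lam → lam < lamΓ →
            ∀ g : Fin r → ℝ,
              IsMinOn (templateObj N y (fun a => phat a ω) lam) univ g →
                ∀ a, Γ < y a * g a} := by
  obtain ⟨a₀, ha₀⟩ := hpmin.1
  have hpmin_le : ∀ a, pmin ≤ p a := fun a => hpmin.2 ⟨a, rfl⟩
  obtain ⟨lamΓ, hlamΓ, hmargin⟩ :=
    exists_margin_gt_of_isMinOn_templateObj N hN y hy (half_pos (ha₀ ▸ hp a₀)) Γ
  have hphat_le_one : ∀ a ω, phat a ω ≤ 1 := fun a ω => by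
    rw [hphat]
    exact div_le_one_of_le₀ (by exact_mod_cast (card_le_univ _).trans_eq (Fintype.card_fin n))
      n.cast_nonneg
  refine ⟨lamΓ, hlamΓ, ?_⟩
  have hgood := one_sub_card_mul_exp_le_measure_forall_half_le hn Z hZmeas hindep
    (fun a => (hp a).le) hdist hpmin_le
  simp only [Fintype.card_fin, ← hphat] at hgood
  refine hgood.trans (measure_mono fun ω hω => ⟨hω, hmargin _ (fun a => ?_) (hphat_le_one · ω)⟩)
  exact (div_le_div_of_nonneg_right (hpmin_le a) zero_le_two).trans (hω a)

/-- Ideal margin with empirical template weights: with probability at least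
`1 − r·exp(−n·p_min/8)`, all templates are well represented (`p̂_a ≥ p_a/2`) and,
for every ridge parameter `λ ∈ (0, λ_Γ)`, the unique minimizer of `Φ_{p̂,λ}`
has signed margin larger than `Γ` on every template. -/
theorem ideal_margin_empirical_weights
    {Ω : Type*} [MeasurableSpace Ω] (μ : Measure Ω) [IsProbabilityMeasure μ]
    (n r : ℕ) (hn : 0 < n) (hr : 0 < r)
    (Z : Fin n → Ω → Fin r) (hZmeas : ∀ i, Measurable (Z i))
    (hindep : iIndepFun Z μ)
    (p : Fin r → ℝ) (hp : ∀ a, 0 < p a)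
    (hdist : ∀ i a, μ {ω | Z i ω = a} = ENNReal.ofReal (p a))
    (pmin : ℝ) (hpmin : IsLeast {x : ℝ | ∃ a, x = p a} pmin)
    (N : Matrix (Fin r) (Fin r) ℝ) (hN : N.PosDef)
    (y : Fin r → ℝ) (hy : ∀ a, y a = 1 ∨ y a = -1)
    (phat : Fin r → Ω → ℝ)
    (hphat : ∀ a ω, phat a ω = ((univ.filter (fun i => Z i ω = a)).card : ℝ) / n)
    (Γ : ℝ) (hΓ : 0 ≤ Γ) :
    ∃ lamΓ : ℝ, 0 < lamΓ ∧
      ENNReal.ofReal (1 - r * Real.exp (-(n * pmin) / 8)) ≤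
        μ {ω | (∀ a, p a / 2 ≤ phat a ω) ∧
          ∀ lam : ℝ, 0 < lam → lam < lamΓ →
            ∀ g : Fin r → ℝ,
              IsMinOn (templateObj N y (fun a => phat a ω) lam) univ g →
                ∀ a, Γ < y a * g a} :=
  ideal_margin_empirical_weights_general μ n r hn Z hZmeas hindep p hp hdist pmin hpmin N hN y hy
    phat hphat Γ
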